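/- Let T>0 and (f_n) a sequence of continuous real-valued functions on [0,T] converging to a continuous function f in L^1(0,T). Assume there exists C ∈ ℝ such that each f_n and f satisfy f_n' ≤ C and f' ≤ C in the sense of distributions (equivalently, t ↦ f_n(t) − Ct and t ↦ f(t) − Ct are non-increasing), and assume f_n(0) → f(0). Then for every T' < T, f_n converges to f uniformly on [0,T']. -/
import Mathlib

open MeasureTheory Filter Set Topology

-- upper bound: for antitone h - Ct, ∫_a^b h ≤ (b-a)*(h a + |C|(b-a))
lemma upper_avg (h : ℝ → ℝ) (C a b : ℝ) (hab : a ≤ b)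
    (hc : ContinuousOn h (Icc a b))
    (hm : AntitoneOn (fun t => h t - C * t) (Icc a b)) :
    (∫ s in a..b, h s) ≤ (b - a) * (h a + |C| * (b - a)) := by
  have hint : IntervalIntegrable h volume a b := by
    apply ContinuousOn.intervalIntegrable; rwa [Set.uIcc_of_le hab]
  have h2 : (∫ s in a..b, h s) ≤ ∫ _s in a..b, (h a + |C| * (b - a)) := by
    apply intervalIntegral.integral_mono_on hab hint intervalIntegrable_const
    intro s hs
    have h1 := hm (left_mem_Icc.2 hab) hs hs.1
    simp only at h1
    nlinarith [le_abs_self C, abs_nonneg C, hs.1, hs.2]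
  simpa only [intervalIntegral.integral_const, smul_eq_mul] using h2

-- lower bound: (b-a)*(h b - |C|(b-a)) ≤ ∫_a^b h
lemma lower_avg (h : ℝ → ℝ) (C a b : ℝ) (hab : a ≤ b)
    (hc : ContinuousOn h (Icc a b))
    (hm : AntitoneOn (fun t => h t - C * t) (Icc a b)) :
    (b - a) * (h b - |C| * (b - a)) ≤ ∫ s in a..b, h s := by
  have hint : IntervalIntegrable h volume a b := by
    apply ContinuousOn.intervalIntegrable; rwa [Set.uIcc_of_le hab]
  have h2 : (∫ _s in a..b, (h b - |C| * (b - a))) ≤ ∫ s in a..b, h s := by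
    apply intervalIntegral.integral_mono_on hab intervalIntegrable_const hint
    intro s hs
    have h1 := hm hs (right_mem_Icc.2 hab) hs.2
    simp only at h1
    nlinarith [le_abs_self C, abs_nonneg C, hs.1, hs.2, neg_abs_le C]
  simpa only [intervalIntegral.integral_const, smul_eq_mul] using h2

set_option maxHeartbeats 2000000 in
/-- If continuous functions `f n` converge to continuous `f` in `L¹(0,T)`,
each `t ↦ f n t - C t` and `t ↦ f t - C t` is non-increasing on `[0,T]`,
and `f n 0 → f 0`, then `f n → f` uniformly on `[0,T']` for every `T' < T`. -/
theorem stmt_0 (T C : ℝ) (hT : 0 < T) (f : ℕ → ℝ → ℝ) (g : ℝ → ℝ)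
    (hfc : ∀ n, ContinuousOn (f n) (Icc 0 T)) (hgc : ContinuousOn g (Icc 0 T))
    (hL1 : Tendsto (fun n => ∫ t in (0:ℝ)..T, |f n t - g t|) atTop (𝓝 0))
    (hfm : ∀ n, AntitoneOn (fun t => f n t - C * t) (Icc 0 T))
    (hgm : AntitoneOn (fun t => g t - C * t) (Icc 0 T))
    (h0 : Tendsto (fun n => f n 0) atTop (𝓝 (g 0))) :
    ∀ T' < T, TendstoUniformlyOn f g atTop (Icc 0 T') := by
  intro T' hT'
  rw [Metric.tendstoUniformlyOn_iff]
  intro ε hε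
  have hgu : UniformContinuousOn g (Icc 0 T) :=
    isCompact_Icc.uniformContinuousOn_of_continuous hgc
  rw [Metric.uniformContinuousOn_iff_le] at hgu
  obtain ⟨δ₁, hδ₁pos, hmod⟩ := hgu (ε/8) (by positivity)
  set δ : ℝ := min (min (δ₁/2) ((T - T')/2)) (ε/(8*(|C|+1))) with hδdef
  have hCnn : (0:ℝ) ≤ |C| := abs_nonneg C
  have hδpos : 0 < δ := lt_min (lt_min (by positivity) (by linarith)) (by positivity)
  have hδ1 : δ ≤ δ₁/2 := le_trans (min_le_left _ _) (min_le_left _ _)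
  have hδ2 : δ ≤ (T - T')/2 := le_trans (min_le_left _ _) (min_le_right _ _)
  have hδ3 : δ ≤ ε/(8*(|C|+1)) := min_le_right _ _
  have hδC : |C| * δ ≤ ε/8 := by
    have h1 : (|C|+1) * δ ≤ (|C|+1) * (ε/(8*(|C|+1))) := by
      apply mul_le_mul_of_nonneg_left hδ3 (by positivity)
    have h2 : (|C|+1) * (ε/(8*(|C|+1))) = ε/8 := by
      field_simp
    nlinarith
  have h1 : ∀ᶠ n in atTop, (∫ t in (0:ℝ)..T, |f n t - g t|) < δ*ε/4 :=
    hL1.eventually_lt_const (by positivity)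
  have h2 : ∀ᶠ n in atTop, |f n 0 - g 0| < ε/8 := by
    have := h0.eventually (Metric.ball_mem_nhds (g 0) (by positivity : (0:ℝ) < ε/8))
    filter_upwards [this] with n hn
    rwa [Real.dist_eq] at hn
  filter_upwards [h1, h2] with n hn1 hn2
  intro t ht
  obtain ⟨ht0, htT'⟩ := ht
  have htT : t + δ ≤ T := by linarith
  have htmem : t ∈ Icc 0 T := ⟨ht0, by linarith⟩
  rw [Real.dist_eq]
  set η := ∫ s in (0:ℝ)..T, |f n s - g s| with hηdef
  have hη : η < δ*ε/4 := hn1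
  -- integrability
  have habsint : IntervalIntegrable (fun s => |f n s - g s|) volume 0 T := by
    apply ContinuousOn.intervalIntegrable
    rw [Set.uIcc_of_le hT.le]
    exact ((hfc n).sub hgc).abs
  have hsubR : Icc t (t+δ) ⊆ Icc 0 T := Icc_subset_Icc ht0 htT
  have hgiR : IntervalIntegrable g volume t (t+δ) := by
    apply ContinuousOn.intervalIntegrable
    rw [Set.uIcc_of_le (by linarith : t ≤ t+δ)]
    exact hgc.mono hsubR
  have hfiR : IntervalIntegrable (f n) volume t (t+δ) := by
    apply ContinuousOn.intervalIntegrable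
    rw [Set.uIcc_of_le (by linarith : t ≤ t+δ)]
    exact (hfc n).mono hsubR
  -- g-average bounds on [t, t+δ]
  have hmodR : ∀ s ∈ Icc t (t+δ), g t - ε/8 ≤ g s ∧ g s ≤ g t + ε/8 := by
    intro s hs
    have hsm : s ∈ Icc 0 T := hsubR hs
    have := hmod s hsm t htmem (by
      rw [Real.dist_eq, abs_le]
      constructor <;> [linarith [hs.1]; linarith [hs.2, hδ₁pos, hδ1]])
    rw [Real.dist_eq] at this
    have := abs_le.mp this
    constructor <;> linarith [this.1, this.2]
  have A1 : δ * (g t - ε/8) ≤ ∫ s in t..(t+δ), g s := by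
    have h' : (∫ _s in t..(t+δ), (g t - ε/8)) ≤ ∫ s in t..(t+δ), g s := by
      apply intervalIntegral.integral_mono_on (by linarith) intervalIntegrable_const hgiR
      exact fun s hs => (hmodR s hs).1
    simpa only [intervalIntegral.integral_const, smul_eq_mul, add_sub_cancel_left] using h'
  -- f n upper-avg on [t,t+δ]
  have B : (∫ s in t..(t+δ), f n s) ≤ δ * (f n t + |C| * δ) := by
    have h' := upper_avg (f n) C t (t+δ) (by linarith) ((hfc n).mono hsubR)
      ((hfm n).mono hsubR)
    simpa only [add_sub_cancel_left] using h'
  -- L1 bound on [t, t+δ]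
  have habsR : IntervalIntegrable (fun s => |f n s - g s|) volume t (t+δ) := by
    apply ContinuousOn.intervalIntegrable
    rw [Set.uIcc_of_le (by linarith : t ≤ t+δ)]
    exact (((hfc n).sub hgc).abs).mono hsubR
  have hCR : (∫ s in t..(t+δ), g s) - (∫ s in t..(t+δ), f n s) ≤ η := by
    have e0 : (∫ s in t..(t+δ), (g s - f n s)) =
        (∫ s in t..(t+δ), g s) - (∫ s in t..(t+δ), f n s) :=
      intervalIntegral.integral_sub hgiR hfiR
    have e1 : (∫ s in t..(t+δ), (g s - f n s)) ≤ ∫ s in t..(t+δ), |f n s - g s| := by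
      apply intervalIntegral.integral_mono_on (by linarith) (hgiR.sub hfiR) habsR
      intro s _
      rw [abs_sub_comm]
      exact le_abs_self _
    have e2 : (∫ s in t..(t+δ), |f n s - g s|) ≤ η :=
      intervalIntegral.integral_mono_interval ht0 (by linarith) htT
        (Filter.Eventually.of_forall (fun s => abs_nonneg _)) habsint
    linarith
  -- direction 1 : g t - f n t < ε
  have dir1 : g t - f n t < ε := by
    have key : δ * (g t - f n t) ≤ δ*ε/8 + η + |C| * δ^2 := by nlinarith [A1, B, hCR]
    have key2 : δ * (g t - f n t) < δ * ε := by nlinarith [hη, hδC, hδpos, hε]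
    exact (mul_lt_mul_iff_right₀ hδpos).mp key2
  -- direction 2 : f n t - g t < ε
  have dir2 : f n t - g t < ε := by
    rcases lt_or_ge t δ with hcase | hcase
    · -- small t : use f n 0
      have hf0 : f n t - C * t ≤ f n 0 - C * 0 :=
        (hfm n) (left_mem_Icc.2 hT.le) htmem ht0
      have hCt : C * t ≤ |C| * δ := by nlinarith [le_abs_self C, ht0, hcase.le]
      have hg0 : g t - g 0 ≥ -(ε/8) := by
        have := hmod t htmem 0 (left_mem_Icc.2 hT.le) (by
          rw [Real.dist_eq, abs_le]
          constructor <;> [linarith; linarith [hδ₁pos, hδ1, hcase.le]])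
        rw [Real.dist_eq] at this
        linarith [(abs_le.mp this).1]
      have habs0 := abs_lt.mp hn2
      linarith [habs0.1, habs0.2]
    · -- t ≥ δ : use left interval [t-δ, t]
      have hsubL : Icc (t-δ) t ⊆ Icc 0 T := Icc_subset_Icc (by linarith) (by linarith)
      have hgiL : IntervalIntegrable g volume (t-δ) t := by
        apply ContinuousOn.intervalIntegrable
        rw [Set.uIcc_of_le (by linarith : t-δ ≤ t)]
        exact hgc.mono hsubL
      have hfiL : IntervalIntegrable (f n) volume (t-δ) t := by
        apply ContinuousOn.intervalIntegrable
        rw [Set.uIcc_of_le (by linarith : t-δ ≤ t)]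
        exact (hfc n).mono hsubL
      have habsL : IntervalIntegrable (fun s => |f n s - g s|) volume (t-δ) t := by
        apply ContinuousOn.intervalIntegrable
        rw [Set.uIcc_of_le (by linarith : t-δ ≤ t)]
        exact (((hfc n).sub hgc).abs).mono hsubL
      have D : δ * (f n t - |C| * δ) ≤ ∫ s in (t-δ)..t, f n s := by
        have h' := lower_avg (f n) C (t-δ) t (by linarith) ((hfc n).mono hsubL)
          ((hfm n).mono hsubL)
        simpa only [sub_sub_cancel] using h'
      have E : (∫ s in (t-δ)..t, f n s) - (∫ s in (t-δ)..t, g s) ≤ η := by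
        have e0 : (∫ s in (t-δ)..t, (f n s - g s)) =
            (∫ s in (t-δ)..t, f n s) - (∫ s in (t-δ)..t, g s) :=
          intervalIntegral.integral_sub hfiL hgiL
        have e1 : (∫ s in (t-δ)..t, (f n s - g s)) ≤ ∫ s in (t-δ)..t, |f n s - g s| := by
          apply intervalIntegral.integral_mono_on (by linarith) (hfiL.sub hgiL) habsL
          exact fun s _ => le_abs_self _
        have e2 : (∫ s in (t-δ)..t, |f n s - g s|) ≤ η :=
          intervalIntegral.integral_mono_interval (by linarith) (by linarith) (by linarith)
            (Filter.Eventually.of_forall (fun s => abs_nonneg _)) habsint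
        linarith
      have F : (∫ s in (t-δ)..t, g s) ≤ δ * (g t + ε/8) := by
        have h' : (∫ s in (t-δ)..t, g s) ≤ ∫ _s in (t-δ)..t, (g t + ε/8) := by
          apply intervalIntegral.integral_mono_on (by linarith) hgiL intervalIntegrable_const
          intro s hs
          have hsm : s ∈ Icc 0 T := hsubL hs
          have := hmod s hsm t htmem (by
            rw [Real.dist_eq, abs_le]
            constructor <;> [linarith [hs.1, hδ₁pos, hδ1]; linarith [hs.2]])
          rw [Real.dist_eq] at this
          linarith [(abs_le.mp this).2]
        simpa only [intervalIntegral.integral_const, smul_eq_mul, sub_sub_cancel] using h'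
      have key : δ * (f n t - g t) ≤ δ*ε/8 + η + |C| * δ^2 := by nlinarith [D, E, F]
      have key2 : δ * (f n t - g t) < δ * ε := by nlinarith [hη, hδC, hδpos, hε]
      exact (mul_lt_mul_iff_right₀ hδpos).mp key2
  rw [abs_sub_lt_iff]
  exact ⟨dir1, dir2⟩
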